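/- arXiv:2204.11652 — 6 statements merged into one kernel-verified Lean document; each statement's English description precedes it below -/
import Mathlib

section
/- Let E be a real inner product space of finite dimension r. If v₁, …, v_m are vectors in E such that ⟪v_i, v_j⟫ < 0 for all i ≠ j, then m ≤ r + 1. -/
/-! Remove the last vector `u`: the others have pairwise negative inner products and lie in the
open half-space `⟪·, u⟫ < 0`. Such vectors are linearly independent: split a vanishing linear
combination into its positive and negative parts; both are the same vector `w`, and expanding
`⟪w, w⟫` leaves only products of distinct vectors, so `⟪w, w⟫ ≤ 0` and `w = 0`. Pairing each part
with `u` then forces all coefficients to vanish. Hence `m - 1 ≤ r`. -/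

open scoped RealInnerProductSpace

section

open Finset

variable {E : Type*} [NormedAddCommGroup E] [InnerProductSpace ℝ E] {ι : Type*}

lemma inner_sum_smul_sum_smul_nonpos (s : Finset ι) {v : ι → E}
    (hv : Pairwise fun i j => ⟪v i, v j⟫ ≤ 0) {a b : ι → ℝ} (ha : ∀ i, 0 ≤ a i)
    (hb : ∀ i, 0 ≤ b i) (hab : ∀ i, a i * b i = 0) :
    ⟪∑ i ∈ s, a i • v i, ∑ j ∈ s, b j • v j⟫ ≤ 0 := by
  rw [sum_inner]
  refine sum_nonpos fun i _ => ?_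
  rw [inner_sum]
  refine sum_nonpos fun j _ => ?_
  rw [real_inner_smul_left, real_inner_smul_right, ← mul_assoc]
  obtain rfl | hij := eq_or_ne i j
  · rw [hab, zero_mul]
  · exact mul_nonpos_of_nonneg_of_nonpos (mul_nonneg (ha i) (hb j)) (hv hij)

lemma eq_zero_of_sum_smul_eq_zero_of_inner_neg {s : Finset ι} {v : ι → E} {u : E}
    (hu : ∀ i, ⟪v i, u⟫ < 0) {a : ι → ℝ} (ha : ∀ i, 0 ≤ a i)
    (hsum : ∑ i ∈ s, a i • v i = 0) {i : ι} (hi : i ∈ s) : a i = 0 := by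
  have hterms : ∑ j ∈ s, a j * ⟪v j, u⟫ = 0 := by
    simpa only [sum_inner, real_inner_smul_left, inner_zero_left] using congrArg (⟪·, u⟫) hsum
  have hterm := (sum_eq_zero_iff_of_nonpos fun j _ =>
    mul_nonpos_of_nonneg_of_nonpos (ha j) (hu j).le).mp hterms i hi
  exact (mul_eq_zero.mp hterm).resolve_right (hu i).ne

theorem linearIndependent_of_pairwise_inner_nonpos_of_inner_neg {v : ι → E}
    (hv : Pairwise fun i j => ⟪v i, v j⟫ ≤ 0) {u : E} (hu : ∀ i, ⟪v i, u⟫ < 0) :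
    LinearIndependent ℝ v := by
  rw [linearIndependent_iff']
  intro s c hc i hi
  have hparts : ∑ j ∈ s, (c j)⁺ • v j = ∑ j ∈ s, (c j)⁻ • v j := by
    rw [← sub_eq_zero, ← sum_sub_distrib]
    simpa only [← sub_smul, posPart_sub_negPart] using hc
  have hzero : ∑ j ∈ s, (c j)⁺ • v j = 0 := by
    have hnonpos := inner_sum_smul_sum_smul_nonpos s hv (fun j => posPart_nonneg (c j))
      (fun j => negPart_nonneg (c j)) fun j => by
        rcases le_total (c j) 0 with hcj | hcj <;> simp [hcj]
    rwa [← hparts, real_inner_self_nonpos] at hnonpos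
  have hpos := eq_zero_of_sum_smul_eq_zero_of_inner_neg hu (fun j => posPart_nonneg _) hzero hi
  have hneg := eq_zero_of_sum_smul_eq_zero_of_inner_neg hu (fun j => negPart_nonneg _)
    (hparts ▸ hzero) hi
  rw [← posPart_sub_negPart (c i), hpos, hneg, sub_zero]

end

/-- A Euclidean vector space of dimension `r` contains at most `r + 1` vectors
which have pairwise negative inner products. -/
theorem pairwise_neg_inner_card_le {E : Type*} [NormedAddCommGroup E]
    [InnerProductSpace ℝ E] [FiniteDimensional ℝ E] (r : ℕ)
    (hr : Module.finrank ℝ E = r) (m : ℕ) (v : Fin m → E)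
    (h : ∀ i j : Fin m, i ≠ j → ⟪v i, v j⟫ < 0) :
    m ≤ r + 1 := by
  obtain _ | n := m
  · exact Nat.zero_le _
  have hli : LinearIndependent ℝ fun i : Fin n => v i.castSucc :=
    linearIndependent_of_pairwise_inner_nonpos_of_inner_neg (u := v (Fin.last n))
      (fun i j hij => (h _ _ ((Fin.castSucc_injective n).ne hij)).le)
      (fun i => h _ _ (Fin.castSucc_lt_last i).ne)
  simpa [hr] using hli.fintype_card_le_finrank
end

section
/- Let N ≥ 1, let a, b ∈ U(N) be involutions (a² = 1 and b² = 1), and let U be a connected subset of U(N) such that for every g ∈ U the element a·g·b·g⁻¹ has finite order. Then the order of a·g·b·g⁻¹ is constant for g ∈ U: for all g, h ∈ U, orderOf(a·g·b·g⁻¹) = orderOf(a·h·b·h⁻¹). -/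
/-!
Every power of `x = a g b g⁻¹` is unitary of finite order, so its eigenvalues are roots of unity
and its trace is an algebraic integer. Algebraic integers form a countable set, so each
`g ↦ tr (x ^ m)` is a continuous map from a connected set to a countable subset of `ℂ`, hence
constant. For a unitary `u`, `tr u = N` holds exactly when `u = 1` (as `‖u - 1‖² = 2N - 2 Re tr u`
in the Frobenius norm), so the set of `m` with `x ^ m = 1`, and with it the order of `x`, does not
depend on `g`.
-/

open Polynomial
open scoped ComplexOrder

namespace Matrix

variable {n : Type*} [Fintype n] [DecidableEq n]

theorem pow_eq_one_of_mem_roots_charpoly {K : Type*} [Field K] {M : Matrix n n K} {k : ℕ}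
    (hM : M ^ k = 1) {μ : K} (hμ : μ ∈ M.charpoly.roots) : μ ^ k = 1 := by
  have hσ := mem_spectrum_of_isRoot_charpoly (isRoot_of_mem_roots hμ)
  rcases subsingleton_or_nontrivial (Matrix n n K) with _ | _
  · simp [spectrum.of_subsingleton] at hσ
  simpa [hM, spectrum.one_eq] using spectrum.pow_mem_pow M k hσ

theorem isIntegral_trace_of_isOfFinOrder {K : Type*} [Field K] [IsAlgClosed K]
    {M : Matrix n n K} (hM : IsOfFinOrder M) : IsIntegral ℤ M.trace := by
  rw [trace_eq_sum_roots_charpoly]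
  refine Subalgebra.multiset_sum_mem (integralClosure ℤ K) fun μ hμ => ?_
  have hμ_pow := pow_eq_one_of_mem_roots_charpoly (pow_orderOf_eq_one M) hμ
  exact (IsPrimitiveRoot.orderOf μ).isIntegral
    (isOfFinOrder_iff_pow_eq_one.mpr ⟨_, hM.orderOf_pos, hμ_pow⟩).orderOf_pos

theorem UnitaryGroup.trace_eq_card_iff {𝕜 : Type*} [RCLike 𝕜] (U : unitaryGroup n 𝕜) :
    (U : Matrix n n 𝕜).trace = Fintype.card n ↔ U = 1 := by
  refine ⟨fun h => ?_, fun h => by simp [h]⟩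
  set A : Matrix n n 𝕜 := U.1
  have hA : Aᴴ * A = 1 := UnitaryGroup.star_mul_self U
  have hnorm : ((A - 1)ᴴ * (A - 1)).trace = 0 := by
    simp only [conjTranspose_sub, conjTranspose_one, sub_mul, mul_sub, hA, mul_one, one_mul,
      trace_sub, trace_one, trace_conjTranspose, h, RCLike.star_def, map_natCast, sub_self]
  exact Subtype.ext (sub_eq_zero.mp (trace_conjTranspose_mul_self_eq_zero_iff.mp hnorm))

end Matrix

theorem IsPreconnected.eq_of_countable_image {X Y : Type*} [TopologicalSpace X] [MetricSpace Y]
    {S : Set X} {f : X → Y} (hS : IsPreconnected S) (hf : ContinuousOn f S)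
    (hc : (f '' S).Countable) {x y : X} (hx : x ∈ S) (hy : y ∈ S) : f x = f y :=
  hc.isTotallyDisconnected _ subset_rfl (hS.image f hf) (Set.mem_image_of_mem f hx)
    (Set.mem_image_of_mem f hy)

open Matrix in
theorem IsPreconnected.orderOf_eq_of_continuousOn_unitaryGroup {X n : Type*}
    [TopologicalSpace X] [Fintype n] [DecidableEq n] {S : Set X} (hS : IsPreconnected S)
    {f : X → unitaryGroup n ℂ} (hf : ContinuousOn f S) (hfin : ∀ x ∈ S, IsOfFinOrder (f x))
    {x y : X} (hx : x ∈ S) (hy : y ∈ S) : orderOf (f x) = orderOf (f y) := by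
  have htrace (m : ℕ) : ((f x ^ m : unitaryGroup n ℂ) : Matrix n n ℂ).trace =
      ((f y ^ m : unitaryGroup n ℂ) : Matrix n n ℂ).trace := by
    refine hS.eq_of_countable_image
      (f := fun z => ((f z ^ m : unitaryGroup n ℂ) : Matrix n n ℂ).trace) ?_ ?_ hx hy
    · exact (continuous_subtype_val.comp (continuous_pow m)).matrix_trace.comp_continuousOn hf
    · refine (Algebraic.countable ℤ ℂ).mono ?_
      rintro _ ⟨z, hz, rfl⟩
      exact (isIntegral_trace_of_isOfFinOrder
        ((unitaryGroup n ℂ).subtype.isOfFinOrder (hfin z hz).pow)).isAlgebraic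
  rw [orderOf_eq_orderOf_iff]
  intro m
  rw [← UnitaryGroup.trace_eq_card_iff, ← UnitaryGroup.trace_eq_card_iff, htrace m]

theorem orderOf_conj_prod_constant_on_connected_general (N : ℕ)
    (a b : Matrix.unitaryGroup (Fin N) ℂ)
    (U : Set (Matrix.unitaryGroup (Fin N) ℂ)) (hU : IsConnected U)
    (hfin : ∀ g ∈ U, IsOfFinOrder (a * g * b * g⁻¹)) :
    ∀ g ∈ U, ∀ h ∈ U,
      orderOf (a * g * b * g⁻¹) = orderOf (a * h * b * h⁻¹) := fun _ hg _ hh =>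
  hU.isPreconnected.orderOf_eq_of_continuousOn_unitaryGroup (by fun_prop) hfin hg hh

/-- If `a` and `b` are involutions in `U(N)` and `a * g * b * g⁻¹` has finite
order for every `g` in a connected subset `U`, then this order is constant on
`U`. -/
theorem orderOf_conj_prod_constant_on_connected (N : ℕ) (hN : 1 ≤ N)
    (a b : Matrix.unitaryGroup (Fin N) ℂ) (ha : a ^ 2 = 1) (hb : b ^ 2 = 1)
    (U : Set (Matrix.unitaryGroup (Fin N) ℂ)) (hU : IsConnected U)
    (hfin : ∀ g ∈ U, IsOfFinOrder (a * g * b * g⁻¹)) :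
    ∀ g ∈ U, ∀ h ∈ U,
      orderOf (a * g * b * g⁻¹) = orderOf (a * h * b * h⁻¹) :=
  orderOf_conj_prod_constant_on_connected_general N a b U hU hfin
end

section
/- Let a and b be nontrivial involutions in SO(3), i.e. real orthogonal 3×3 matrices of determinant 1 with a² = 1, a ≠ 1, b² = 1, b ≠ 1. Then there exists g ∈ SO(3) such that a·g·b·g⁻¹ has infinite order (is not of finite order). -/
/-!
A nontrivial involution of `SO(3)` is a symmetric matrix with eigenvalues `±1`, exactly one of
which is `1`; the spectral theorem therefore conjugates it inside `SO(3)` to the half-turn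
`h = diag(1, -1, -1)`. Writing `a = p h p⁻¹`, `b = q h q⁻¹` and taking `g = p r q⁻¹` with `r` a
rotation about the third axis, `a g b g⁻¹` is conjugate to `h r h r⁻¹ = r⁻²`, because `h`
inverts every rotation about that axis. For `r` of angle `-1` this is the rotation by `2`, of
infinite order since `π` is irrational.
-/

open Matrix Real

namespace Matrix

variable {n α : Type*} [Fintype n] [DecidableEq n]

lemma UnitaryGroup.isHermitian_of_sq_eq_one [CommRing α] [StarRing α] {a : unitaryGroup n α}
    (ha : a ^ 2 = 1) : (a : Matrix n n α).IsHermitian := by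
  have ha_inv : a⁻¹ = a := inv_eq_of_mul_eq_one_right (by rwa [← sq])
  change star (a : Matrix n n α) = a
  rw [← UnitaryGroup.inv_val, ha_inv]

lemma IsHermitian.eigenvalues_eq_one_or_neg_one {𝕜 : Type*} [RCLike 𝕜] {A : Matrix n n 𝕜}
    (hA : A.IsHermitian) (hA2 : A ^ 2 = 1) (i : n) :
    hA.eigenvalues i = 1 ∨ hA.eigenvalues i = -1 := by
  have : Nonempty n := ⟨i⟩
  have hmem := spectrum.pow_image_subset A 2 ⟨_, hA.eigenvalues_mem_spectrum_real i, rfl⟩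
  rw [hA2, spectrum.one_eq, Set.mem_singleton_iff] at hmem
  exact sq_eq_one_iff.1 hmem

lemma submatrix_mem_unitaryGroup [CommRing α] [StarRing α] {U : Matrix n n α}
    (hU : U ∈ unitaryGroup n α) (σ : Equiv.Perm n) : U.submatrix id σ ∈ unitaryGroup n α := by
  rw [mem_unitaryGroup_iff, star_eq_conjTranspose, conjTranspose_submatrix, submatrix_mul_equiv,
    ← star_eq_conjTranspose, mem_unitaryGroup_iff.1 hU, submatrix_id_id]

lemma submatrix_mul_diagonal_comp_mul_star [CommRing α] [StarRing α] (U : Matrix n n α)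
    (d : n → α) (σ : Equiv.Perm n) :
    U.submatrix id σ * diagonal (d ∘ σ) * star (U.submatrix id σ) = U * diagonal d * star U := by
  rw [← submatrix_diagonal_equiv, star_eq_conjTranspose, conjTranspose_submatrix,
    submatrix_mul_equiv, submatrix_mul_equiv, submatrix_id_id, star_eq_conjTranspose]

lemma det_eq_one_or_neg_one_of_mem_orthogonalGroup {R : Type*} [CommRing R] [NoZeroDivisors R]
    {A : Matrix n n R} (hA : A ∈ orthogonalGroup n R) : A.det = 1 ∨ A.det = -1 := by
  have h := congrArg det ((mem_orthogonalGroup_iff n R).1 hA)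
  rwa [det_mul, det_transpose, det_one, ← sq, sq_eq_one_iff] at h

lemma orthogonalGroup.exists_det_eq_one_conj_eq (hn : Odd (Fintype.card n))
    (p x : orthogonalGroup n ℝ) :
    ∃ q : orthogonalGroup n ℝ, (q : Matrix n n ℝ).det = 1 ∧ q * x * q⁻¹ = p * x * p⁻¹ := by
  rcases det_eq_one_or_neg_one_of_mem_orthogonalGroup p.2 with hp | hp
  · exact ⟨p, hp, rfl⟩
  · refine ⟨-p, ?_, by simp⟩
    rw [Unitary.coe_neg, det_neg, hp, hn.neg_one_pow, neg_one_mul, neg_neg]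

end Matrix

lemma exists_perm_comp_eq_one_neg_one_neg_one {R : Type*} [CommRing R] [CharZero R]
    (e : Fin 3 → R) (he : ∀ i, e i = 1 ∨ e i = -1) (hprod : ∏ i, e i = 1) (hne : e ≠ 1) :
    ∃ σ : Equiv.Perm (Fin 3), e ∘ σ = ![1, -1, -1] := by
  rw [Fin.prod_univ_three] at hprod
  rcases he 0 with h0 | h0 <;> rcases he 1 with h1 | h1 <;> rcases he 2 with h2 | h2 <;>
    simp only [h0, h1, h2] at hprod <;> norm_num at hprod
  · exact absurd (funext fun i => by fin_cases i <;> simp [h0, h1, h2]) hne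
  · exact ⟨1, funext fun i => by fin_cases i <;> simp [h0, h1, h2]⟩
  · exact ⟨Equiv.swap 0 1, funext fun i => by
      fin_cases i <;> simp [Equiv.swap_apply_def, h0, h1, h2]⟩
  · exact ⟨Equiv.swap 0 2, funext fun i => by
      fin_cases i <;> simp [Equiv.swap_apply_def, h0, h1, h2]⟩

noncomputable section

namespace SO3

def halfTurn : orthogonalGroup (Fin 3) ℝ :=
  ⟨diagonal ![1, -1, -1], by
    rw [mem_orthogonalGroup_iff, diagonal_transpose, diagonal_mul_diagonal, ← diagonal_one]
    congr 1
    ext i; fin_cases i <;> norm_num⟩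

def rotZ (t : ℝ) : orthogonalGroup (Fin 3) ℝ :=
  ⟨!![cos t, -sin t, 0; sin t, cos t, 0; 0, 0, 1], by
    rw [mem_orthogonalGroup_iff, ← Matrix.ext_iff]
    intro i j
    fin_cases i <;> fin_cases j <;>
      simp [mul_apply, Fin.sum_univ_three, one_apply, ← sq, mul_comm]⟩

lemma rotZ_add (s t : ℝ) : rotZ (s + t) = rotZ s * rotZ t := by
  ext i j
  fin_cases i <;> fin_cases j <;> simp [rotZ, cos_add, sin_add] <;> ring

lemma rotZ_zero : rotZ 0 = 1 := by
  ext i j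
  fin_cases i <;> fin_cases j <;> simp [rotZ]

lemma rotZ_inv (t : ℝ) : (rotZ t)⁻¹ = rotZ (-t) :=
  inv_eq_of_mul_eq_one_right (by rw [← rotZ_add, add_neg_cancel, rotZ_zero])

lemma rotZ_pow (t : ℝ) (n : ℕ) : rotZ t ^ n = rotZ (n * t) := by
  induction n with
  | zero => simp [rotZ_zero]
  | succ n ih => rw [pow_succ, ih, ← rotZ_add]; push_cast; ring_nf

lemma det_rotZ (t : ℝ) : (rotZ t : Matrix (Fin 3) (Fin 3) ℝ).det = 1 := by
  simp [rotZ, det_fin_three, ← sq]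

lemma halfTurn_mul_rotZ_mul_halfTurn (t : ℝ) : halfTurn * rotZ t * halfTurn = rotZ (-t) := by
  ext i j
  fin_cases i <;> fin_cases j <;> simp [halfTurn, rotZ, diagonal_fin_three]

lemma not_isOfFinOrder_rotZ {t : ℝ} (ht : Irrational (t / π)) : ¬IsOfFinOrder (rotZ t) := by
  rw [isOfFinOrder_iff_pow_eq_one]
  rintro ⟨n, hn, hpow⟩
  rw [rotZ_pow] at hpow
  have hcos : cos (n * t) = 1 := by
    simpa [rotZ] using congrArg (fun g : orthogonalGroup (Fin 3) ℝ => g 0 0) hpow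
  obtain ⟨k, hk⟩ := (cos_eq_one_iff _).1 hcos
  refine ht ⟨2 * k / n, ?_⟩
  have : (n : ℝ) ≠ 0 := by positivity
  push_cast
  field_simp
  linarith

lemma exists_eq_conj_halfTurn {a : orthogonalGroup (Fin 3) ℝ}
    (hdet : (a : Matrix (Fin 3) (Fin 3) ℝ).det = 1) (ha2 : a ^ 2 = 1) (ha1 : a ≠ 1) :
    ∃ p : orthogonalGroup (Fin 3) ℝ, (p : Matrix (Fin 3) (Fin 3) ℝ).det = 1 ∧
      a = p * halfTurn * p⁻¹ := by
  have hA := UnitaryGroup.isHermitian_of_sq_eq_one ha2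
  set U := hA.eigenvectorUnitary
  set e := hA.eigenvalues
  have hspec : (a : Matrix (Fin 3) (Fin 3) ℝ) = U * diagonal e * star U := by
    simpa [RCLike.ofReal_real_eq_id] using hA.spectral_theorem
  have he := hA.eigenvalues_eq_one_or_neg_one
    (by rw [← SubmonoidClass.coe_pow, ha2, UnitaryGroup.one_val])
  have hprod : ∏ i, e i = 1 := by simpa [hdet] using hA.det_eq_prod_eigenvalues.symm
  have hne : e ≠ 1 := by
    rintro he1
    refine ha1 (Subtype.ext ?_)
    rw [hspec, he1, Pi.one_def, diagonal_one, mul_one, Unitary.coe_mul_star_self,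
      UnitaryGroup.one_val]
  obtain ⟨σ, hσ⟩ := exists_perm_comp_eq_one_neg_one_neg_one e he hprod hne
  obtain ⟨q, hq, hconj⟩ := orthogonalGroup.exists_det_eq_one_conj_eq (by simp [Nat.odd_iff])
    ⟨(U : Matrix (Fin 3) (Fin 3) ℝ).submatrix id σ, submatrix_mem_unitaryGroup U.2 σ⟩ halfTurn
  refine ⟨q, hq, hconj ▸ Subtype.ext ?_⟩
  simp only [halfTurn, ← hσ, UnitaryGroup.mul_val, UnitaryGroup.inv_val]
  rw [submatrix_mul_diagonal_comp_mul_star, hspec, Unitary.coe_star]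

end SO3

end

open SO3 in
/-- For nontrivial involutions `a`, `b` in `SO(3)` there exists `g ∈ SO(3)` such
that `a * g * b * g⁻¹` has infinite order. -/
theorem so3_exists_conj_infinite_order (a b : Matrix.orthogonalGroup (Fin 3) ℝ)
    (hadet : (a : Matrix (Fin 3) (Fin 3) ℝ).det = 1)
    (hbdet : (b : Matrix (Fin 3) (Fin 3) ℝ).det = 1)
    (ha2 : a ^ 2 = 1) (ha1 : a ≠ 1) (hb2 : b ^ 2 = 1) (hb1 : b ≠ 1) :
    ∃ g : Matrix.orthogonalGroup (Fin 3) ℝ,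
      (g : Matrix (Fin 3) (Fin 3) ℝ).det = 1 ∧
      ¬ IsOfFinOrder (a * g * b * g⁻¹) := by
  obtain ⟨p, hp, rfl⟩ := exists_eq_conj_halfTurn hadet ha2 ha1
  obtain ⟨q, hq, rfl⟩ := exists_eq_conj_halfTurn hbdet hb2 hb1
  refine ⟨p * rotZ (-1) * q⁻¹, by simp [det_mul, star_eq_conjTranspose, hp, hq, det_rotZ],
    fun hfin => ?_⟩
  have hcomm : halfTurn * rotZ (-1) * halfTurn * (rotZ (-1))⁻¹ = rotZ 2 := by
    rw [halfTurn_mul_rotZ_mul_halfTurn, rotZ_inv, ← rotZ_add]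
    norm_num
  have h2pi : Irrational (2 / π) := by simpa using irrational_pi.natCast_div two_ne_zero
  refine not_isOfFinOrder_rotZ h2pi ((isConj_iff.2 ⟨p⁻¹, ?_⟩).isOfFinOrder hfin)
  rw [← hcomm]
  group
end

section
/- Let a and b be nontrivial involutions in SU(3), i.e. elements of the special unitary group of 3×3 complex matrices with a² = 1, a ≠ 1, b² = 1, b ≠ 1. Then there exists g ∈ SU(3) such that a·g·b·g⁻¹ has infinite order (is not of finite order). -/
/-!
A nontrivial involution of `SU(3)` is Hermitian with eigenvalues `1, -1, -1`, so it is conjugate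
in `SU(3)` to `halfTurn = diag(1, -1, -1)`. Writing `a = U halfTurn U⁻¹` and `b = V halfTurn V⁻¹`
and taking `g = U rot V⁻¹` for a rotation `rot` about the third axis, `a g b g⁻¹` is conjugate to
`halfTurn rot halfTurn rot⁻¹ = rot⁻²`. For the rotation with `cos θ = 3/5` the eigenvalue
`e^{iθ} = (3 + 4i)/5` is not a root of unity, so `rot⁻²` has infinite order.
-/

open Matrix Complex

lemma not_isOfFinOrder_three_add_four_I_div_five : ¬ IsOfFinOrder ((3 + 4 * I) / 5 : ℂ) := by
  rw [isOfFinOrder_iff_pow_eq_one]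
  rintro ⟨n, hn, hpow⟩
  let z : GaussianInt := ⟨3, 4⟩
  have hz : z ^ n = 5 ^ n := GaussianInt.toComplex_injective <| by
    rw [div_pow, div_eq_one_iff_eq (by norm_num)] at hpow
    simpa [z, map_pow, GaussianInt.toComplex_def] using hpow
  -- reduce modulo the prime `2 - i` above `5`, where `i ↦ 2` and `3 + 4i ↦ 1`
  let φ : GaussianInt →+* ZMod 5 := Zsqrtd.lift ⟨2, by decide⟩
  have hφz : φ z = 1 := by simp [φ, z, Zsqrtd.lift_apply_apply]; decide
  have hφ5 : φ 5 = 0 := by simp [φ]; decide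
  have := congrArg φ hz
  rw [map_pow, map_pow, hφz, hφ5, one_pow, zero_pow hn.ne'] at this
  exact absurd this (by decide)

lemma IsOfFinOrder.of_mulVec_eq_smul {n K : Type*} [Fintype n] [DecidableEq n] [Field K]
    {M : Matrix n n K} {v : n → K} {c : K} (hM : IsOfFinOrder M) (hv : v ≠ 0)
    (hMv : M *ᵥ v = c • v) : IsOfFinOrder c := by
  rw [isOfFinOrder_iff_pow_eq_one] at hM ⊢
  obtain ⟨k, hk, hMk⟩ := hM
  refine ⟨k, hk, ?_⟩
  have hpow : ∀ m : ℕ, M ^ m *ᵥ v = c ^ m • v := by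
    intro m
    induction m with
    | zero => simp
    | succ m ih => rw [pow_succ, ← mulVec_mulVec, hMv, mulVec_smul, ih, smul_smul, pow_succ']
  have : (c ^ k - 1) • v = 0 := by rw [sub_smul, ← hpow, hMk, one_mulVec, one_smul, sub_self]
  exact sub_eq_zero.mp ((smul_eq_zero.mp this).resolve_right hv)

lemma Matrix.IsHermitian.eigenvalues_eq_one_or_eq_neg_one {𝕜 n : Type*} [RCLike 𝕜] [Fintype n]
    [DecidableEq n] {A : Matrix n n 𝕜} (hA : A.IsHermitian) (hA2 : A * A = 1) (i : n) :
    hA.eigenvalues i = 1 ∨ hA.eigenvalues i = -1 := by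
  set v := (hA.eigenvectorBasis i).ofLp
  have hv : v ≠ 0 := by simpa [v] using hA.eigenvectorBasis.orthonormal.ne_zero i
  have : (hA.eigenvalues i * hA.eigenvalues i - 1) • v = 0 := by
    calc _ = A *ᵥ (A *ᵥ v) - v := by
          rw [sub_smul, one_smul, mul_smul, hA.mulVec_eigenvectorBasis, mulVec_smul,
            hA.mulVec_eigenvectorBasis]
      _ = 0 := by rw [mulVec_mulVec, hA2, one_mulVec, sub_self]
  exact mul_self_eq_one_iff.mp (sub_eq_zero.mp ((smul_eq_zero.mp this).resolve_right hv))

lemma Matrix.UnitaryGroup.isHermitian_of_sq_eq_one_s8 {n α : Type*} [Fintype n] [DecidableEq n]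
    [CommRing α] [StarRing α] {a : unitaryGroup n α} (ha : a ^ 2 = 1) :
    (a : Matrix n n α).IsHermitian :=
  congrArg Subtype.val (inv_eq_of_mul_eq_one_right (by rw [← sq, ha]) : a⁻¹ = a)

lemma exists_perm_eq_one_neg_one_neg_one_comp {R : Type*} [CommRing R] [CharZero R]
    {μ : Fin 3 → R} (hμ : ∀ i, μ i = 1 ∨ μ i = -1) (hprod : ∏ i, μ i = 1) (hne : μ ≠ 1) :
    ∃ σ : Equiv.Perm (Fin 3), μ = ![1, -1, -1] ∘ σ := by
  rw [Fin.prod_univ_three] at hprod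
  rcases hμ 0 with h0 | h0 <;> rcases hμ 1 with h1 | h1 <;> rcases hμ 2 with h2 | h2 <;>
    simp only [h0, h1, h2] at hprod <;> norm_num at hprod
  · exact absurd (funext fun i => by fin_cases i <;> simp [h0, h1, h2]) hne
  · exact ⟨1, funext fun i => by fin_cases i <;> simp [h0, h1, h2]⟩
  · exact ⟨Equiv.swap 0 1, funext fun i => by
      fin_cases i <;> simp [h0, h1, h2, Equiv.swap_apply_of_ne_of_ne]⟩
  · exact ⟨Equiv.swap 0 2, funext fun i => by
      fin_cases i <;> simp [h0, h1, h2, Equiv.swap_apply_of_ne_of_ne]⟩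

section

variable {n R : Type*} [Fintype n] [DecidableEq n]

lemma Matrix.diagonal_comp_perm [CommRing R] (d : n → R) (σ : Equiv.Perm n) :
    diagonal (d ∘ σ) = σ.permMatrix R * diagonal d * σ⁻¹.permMatrix R := by
  simp [PEquiv.toMatrix_toPEquiv_mul, PEquiv.mul_toMatrix_toPEquiv, Equiv.Perm.inv_def,
    submatrix_diagonal_equiv]

lemma Matrix.permMatrix_mem_unitaryGroup [CommRing R] [StarRing R] (σ : Equiv.Perm n) :
    σ.permMatrix R ∈ unitaryGroup n R := by
  rw [mem_unitaryGroup_iff, star_eq_conjTranspose, conjTranspose_permMatrix, ← permMatrix_mul,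
    inv_mul_cancel, permMatrix_one]

lemma Matrix.diagonal_mem_unitaryGroup [CommRing R] [StarRing R] {d : n → R}
    (hd : ∀ i, star (d i) * d i = 1) : diagonal d ∈ unitaryGroup n R := by
  rw [mem_unitaryGroup_iff', star_eq_conjTranspose, diagonal_conjTranspose, diagonal_mul_diagonal,
    ← diagonal_one]
  exact congrArg diagonal (funext hd)

end

noncomputable def halfTurn : unitaryGroup (Fin 3) ℂ :=
  ⟨diagonal ![1, -1, -1], diagonal_mem_unitaryGroup fun i => by fin_cases i <;> simp⟩

noncomputable def rot : unitaryGroup (Fin 3) ℂ :=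
  ⟨!![3/5, -4/5, 0; 4/5, 3/5, 0; 0, 0, 1], by
    rw [mem_unitaryGroup_iff']
    ext i j
    fin_cases i <;> fin_cases j <;> simp [mul_apply, Fin.sum_univ_three, map_div₀, map_ofNat] <;>
      norm_num⟩

lemma det_rot : (rot : Matrix (Fin 3) (Fin 3) ℂ).det = 1 := by
  simp [rot, det_fin_three]; ring

lemma halfTurn_mul_rot_mul_halfTurn : halfTurn * rot * halfTurn = rot⁻¹ := by
  ext i j
  fin_cases i <;> fin_cases j <;> simp [halfTurn, rot, mul_apply, Fin.sum_univ_three, neg_div]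

lemma rot_mulVec :
    (rot : Matrix (Fin 3) (Fin 3) ℂ) *ᵥ ![1, -I, 0] = ((3 + 4 * I) / 5) • ![1, -I, 0] := by
  ext i
  fin_cases i <;> simp [rot, mulVec, dotProduct, Fin.sum_univ_three]
  · ring
  · linear_combination (4 / 5 : ℂ) * I_sq

lemma not_isOfFinOrder_rot : ¬ IsOfFinOrder rot := fun h =>
  not_isOfFinOrder_three_add_four_I_div_five <|
    (Submonoid.isOfFinOrder_coe.mpr h).of_mulVec_eq_smul
      (fun hv => one_ne_zero (congrFun hv 0 : (1 : ℂ) = 0)) rot_mulVec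

lemma exists_unitary_conj_halfTurn {a : unitaryGroup (Fin 3) ℂ}
    (hdet : (a : Matrix (Fin 3) (Fin 3) ℂ).det = 1) (h2 : a ^ 2 = 1) (h1 : a ≠ 1) :
    ∃ U : unitaryGroup (Fin 3) ℂ, U * halfTurn * U⁻¹ = a := by
  have hA := UnitaryGroup.isHermitian_of_sq_eq_one_s8 h2
  have hA2 : (a : Matrix (Fin 3) (Fin 3) ℂ) * a = 1 := by
    rw [← UnitaryGroup.mul_val, ← sq, h2, UnitaryGroup.one_val]
  have hspec := hA.spectral_theorem
  rw [Unitary.conjStarAlgAut_apply] at hspec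
  obtain ⟨σ, hσ⟩ : ∃ σ : Equiv.Perm (Fin 3),
      (RCLike.ofReal ∘ hA.eigenvalues : Fin 3 → ℂ) = ![1, -1, -1] ∘ σ := by
    refine exists_perm_eq_one_neg_one_neg_one_comp (fun i => ?_) ?_ ?_
    · rcases hA.eigenvalues_eq_one_or_eq_neg_one hA2 i with h | h <;> simp [h]
    · exact hA.det_eq_prod_eigenvalues.symm.trans hdet
    · intro h
      apply h1
      refine Subtype.ext (hspec.trans ?_)
      rw [h]
      simp
  refine ⟨hA.eigenvectorUnitary * ⟨σ.permMatrix ℂ, permMatrix_mem_unitaryGroup σ⟩, ?_⟩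
  refine Subtype.ext (Eq.trans ?_ hspec.symm)
  rw [hσ, diagonal_comp_perm]
  simp [halfTurn, mul_assoc, star_eq_conjTranspose]

lemma exists_special_conj_halfTurn {a : unitaryGroup (Fin 3) ℂ}
    (hdet : (a : Matrix (Fin 3) (Fin 3) ℂ).det = 1) (h2 : a ^ 2 = 1) (h1 : a ≠ 1) :
    ∃ U : unitaryGroup (Fin 3) ℂ, (U : Matrix (Fin 3) (Fin 3) ℂ).det = 1 ∧
      U * halfTurn * U⁻¹ = a := by
  obtain ⟨U, rfl⟩ := exists_unitary_conj_halfTurn hdet h2 h1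
  have hU : (U : Matrix (Fin 3) (Fin 3) ℂ).det * starRingEnd ℂ (U : Matrix (Fin 3) (Fin 3) ℂ).det
      = 1 := (det_of_mem_unitary U.2).2
  -- a diagonal correction commutes with `halfTurn` and fixes the determinant
  let E : unitaryGroup (Fin 3) ℂ :=
    ⟨diagonal ![star (U : Matrix (Fin 3) (Fin 3) ℂ).det, 1, 1],
      diagonal_mem_unitaryGroup fun i => by fin_cases i <;> simp [hU]⟩
  have hE : E * halfTurn = halfTurn * E := by
    ext1
    simp [E, halfTurn, mul_comm]
  refine ⟨U * E, ?_, ?_⟩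
  · simp [E, det_diagonal, Fin.prod_univ_three, hU]
  · calc U * E * halfTurn * (U * E)⁻¹ = U * (E * halfTurn) * E⁻¹ * U⁻¹ := by group
      _ = U * halfTurn * U⁻¹ := by rw [hE]; group

/-- For nontrivial involutions `a`, `b` in `SU(3)` (unitary `3 × 3` complex
matrices of determinant `1`) there exists `g ∈ SU(3)` such that
`a * g * b * g⁻¹` has infinite order. -/
theorem su3_exists_conj_infinite_order (a b : Matrix.unitaryGroup (Fin 3) ℂ)
    (hadet : (a : Matrix (Fin 3) (Fin 3) ℂ).det = 1)
    (hbdet : (b : Matrix (Fin 3) (Fin 3) ℂ).det = 1)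
    (ha2 : a ^ 2 = 1) (ha1 : a ≠ 1) (hb2 : b ^ 2 = 1) (hb1 : b ≠ 1) :
    ∃ g : Matrix.unitaryGroup (Fin 3) ℂ,
      (g : Matrix (Fin 3) (Fin 3) ℂ).det = 1 ∧
      ¬ IsOfFinOrder (a * g * b * g⁻¹) := by
  obtain ⟨U, hU, rfl⟩ := exists_special_conj_halfTurn hadet ha2 ha1
  obtain ⟨V, hV, rfl⟩ := exists_special_conj_halfTurn hbdet hb2 hb1
  refine ⟨U * rot * V⁻¹, ?_, fun h => not_isOfFinOrder_rot ?_⟩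
  · simp [hU, hV, det_rot, star_eq_conjTranspose]
  · have key : halfTurn * rot * halfTurn * rot⁻¹ = (rot ^ 2)⁻¹ := by
      rw [halfTurn_mul_rot_mul_halfTurn]
      group
    have hconj : IsConj (U * halfTurn * U⁻¹ * (U * rot * V⁻¹) * (V * halfTurn * V⁻¹) *
        (U * rot * V⁻¹)⁻¹) (rot ^ 2)⁻¹ :=
      isConj_iff.mpr ⟨U⁻¹, by rw [← key]; group⟩
    exact (isOfFinOrder_pow.mp (isOfFinOrder_inv_iff.mp (hconj.isOfFinOrder h))).resolve_right
      two_ne_zero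
end

section
/- Let n ≥ 1, T > 0, and let A, R : ℝ → Matrix (Fin n) (Fin n) ℝ be such that for every t ∈ [0, T): A(t) is symmetric, R(t) is positive semidefinite, and A has (one-sided at 0) derivative at t within [0, T) equal to −A(t)·A(t) − R(t) (i.e. A solves the Riccati equation A' + A² + R = 0). If A(0) = 0, then for every t ∈ [0, T) the matrix A(t) is negative semidefinite, i.e. −A(t) is positive semidefinite. -/
/-! Every quadratic form `v ⬝ᵥ A(t) v` has derivative `-|A(t) v|² - v ⬝ᵥ R(t) v ≤ 0`, so `A` is
antitone in the Loewner order on `[0, T)`, and `A(t) ≤ A(0) = 0`. -/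

open Matrix MatrixOrder

theorem hasDerivWithinAt_dotProduct_mulVec {𝕜 m n : Type*} [NontriviallyNormedField 𝕜]
    [Fintype m] [Fintype n] {A : 𝕜 → Matrix m n 𝕜} {A' : Matrix m n 𝕜} {s : Set 𝕜} {t : 𝕜}
    (hA : ∀ i j, HasDerivWithinAt (fun u => A u i j) (A' i j) s t) (v : m → 𝕜) (w : n → 𝕜) :
    HasDerivWithinAt (fun u => v ⬝ᵥ A u *ᵥ w) (v ⬝ᵥ A' *ᵥ w) s t :=
  HasDerivWithinAt.fun_sum fun i _ =>
    (HasDerivWithinAt.fun_sum fun j _ => (hA i j).mul_const (w j)).const_mul (v i)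

theorem Matrix.IsHermitian.posSemidef_mul_self {n R : Type*} [Fintype n] [CommRing R]
    [PartialOrder R] [StarRing R] [StarOrderedRing R] {A : Matrix n n R} (hA : A.IsHermitian) :
    (A * A).PosSemidef := by
  simpa only [hA.eq] using posSemidef_conjTranspose_mul_self A

theorem antitoneOn_dotProduct_mulVec_of_hasDerivWithinAt {n : Type*} [Fintype n]
    {A A' : ℝ → Matrix n n ℝ} {D : Set ℝ} (hD : Convex ℝ D)
    (hA : ∀ t ∈ D, ∀ i j, HasDerivWithinAt (fun u => A u i j) (A' t i j) D t)
    (hA' : ∀ t ∈ interior D, A' t ≤ 0) (v : n → ℝ) :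
    AntitoneOn (fun t => v ⬝ᵥ A t *ᵥ v) D := by
  have hf t (ht : t ∈ D) := hasDerivWithinAt_dotProduct_mulVec (hA t ht) v v
  refine _root_.antitoneOn_of_hasDerivWithinAt_nonpos hD (fun t ht => (hf t ht).continuousWithinAt)
    (fun t ht => (hf t (interior_subset ht)).mono interior_subset) fun t ht => ?_
  simpa [neg_mulVec] using (le_iff.mp (hA' t ht)).dotProduct_mulVec_nonneg v

theorem Matrix.antitoneOn_of_hasDerivWithinAt_nonpos {n : Type*} [Fintype n]
    {A A' : ℝ → Matrix n n ℝ} {D : Set ℝ} (hD : Convex ℝ D)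
    (hA : ∀ t ∈ D, (A t).IsHermitian)
    (hA_deriv : ∀ t ∈ D, ∀ i j, HasDerivWithinAt (fun u => A u i j) (A' t i j) D t)
    (hA' : ∀ t ∈ interior D, A' t ≤ 0) : AntitoneOn A D := by
  intro a ha b hb hab
  refine PosSemidef.of_dotProduct_mulVec_nonneg ((hA a ha).sub (hA b hb)) fun v => ?_
  have := antitoneOn_dotProduct_mulVec_of_hasDerivWithinAt hD hA_deriv hA' v ha hb hab
  simpa [sub_mulVec] using this

theorem riccati_nonpos_of_nonneg_curvature_general (n : ℕ) (T : ℝ)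
    (A R : ℝ → Matrix (Fin n) (Fin n) ℝ)
    (hsymm : ∀ t ∈ Set.Ico (0 : ℝ) T, (A t).IsSymm)
    (hR : ∀ t ∈ Set.Ico (0 : ℝ) T, (R t).PosSemidef)
    (hderiv : ∀ t ∈ Set.Ico (0 : ℝ) T, ∀ i j,
      HasDerivWithinAt (fun s => A s i j) ((-(A t * A t) - R t) i j)
        (Set.Ico (0 : ℝ) T) t)
    (hA0 : A 0 = 0) :
    ∀ t ∈ Set.Ico (0 : ℝ) T, (-(A t)).PosSemidef := by
  have hA t (ht : t ∈ Set.Ico (0 : ℝ) T) : (A t).IsHermitian :=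
    isHermitian_iff_isSymm.mpr (hsymm t ht)
  have hrhs t (ht : t ∈ interior (Set.Ico (0 : ℝ) T)) : -(A t * A t) - R t ≤ 0 := by
    have ht := interior_subset ht
    rw [← neg_add', neg_nonpos]
    exact ((hA t ht).posSemidef_mul_self.add (hR t ht)).nonneg
  have hanti := Matrix.antitoneOn_of_hasDerivWithinAt_nonpos (convex_Ico 0 T) hA hderiv hrhs
  intro t ht
  simpa [hA0, le_iff] using hanti ⟨le_rfl, ht.1.trans_lt ht.2⟩ ht ht.1

/-- Riccati comparison: if `A` is a symmetric solution of the Riccati equation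
`A' + A² + R = 0` on `[0, T)` with `R ≥ 0` and `A 0 = 0`, then `A t ≤ 0` on
`[0, T)`. -/
theorem riccati_nonpos_of_nonneg_curvature (n : ℕ) (hn : 1 ≤ n) (T : ℝ)
    (hT : 0 < T) (A R : ℝ → Matrix (Fin n) (Fin n) ℝ)
    (hsymm : ∀ t ∈ Set.Ico (0 : ℝ) T, (A t).IsSymm)
    (hR : ∀ t ∈ Set.Ico (0 : ℝ) T, (R t).PosSemidef)
    (hderiv : ∀ t ∈ Set.Ico (0 : ℝ) T, ∀ i j,
      HasDerivWithinAt (fun s => A s i j) ((-(A t * A t) - R t) i j)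
        (Set.Ico (0 : ℝ) T) t)
    (hA0 : A 0 = 0) :
    ∀ t ∈ Set.Ico (0 : ℝ) T, (-(A t)).PosSemidef :=
  riccati_nonpos_of_nonneg_curvature_general n T A R hsymm hR hderiv hA0
end

section
/- Let n ≥ 1, T > 0, and let A, R : ℝ → Matrix (Fin n) (Fin n) ℝ be such that for every t ∈ [0, T): A(t) is symmetric, R(t) is positive semidefinite, and A has (one-sided at 0) derivative at t within [0, T) equal to −A(t)·A(t) − R(t); assume A(0) = 0 and that R is continuous on [0, T). Suppose there exist t₀ ∈ [0, T) and k > 0 such that R(t₀) − k·1 is positive semidefinite. Then for every t₁ with t₀ < t₁ < T there exists l < 0 such that for all t ∈ [t₁, T), the matrix l·1 − A(t) is positive semidefinite (i.e. A(t) ≤ l·1 < 0). -/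
/-!
For a fixed vector `v`, the quadratic form `q(t) = vᵀ A(t) v` has derivative
`-|A(t) v|² - vᵀ R(t) v ≤ 0`, so it decreases from `q(0) = 0`. By continuity `R ≥ (k/2)·1` on some
`[t₀, t₀ + ε]` with `t₀ + ε ≤ t₁`, on which `q` therefore drops by at least `(k/2) ε |v|²`. Hence
`A(t) ≤ -(k/2) ε · 1` for `t ≥ t₁`, with `ε` independent of `v`.
-/

open Matrix Set Filter Topology

theorem Convex.image_sub_le_mul_sub_of_hasDerivWithinAt_le {D : Set ℝ} (hD : Convex ℝ D)
    {f f' : ℝ → ℝ} (hf : ∀ x ∈ D, HasDerivWithinAt f (f' x) D x) {C : ℝ}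
    (le_hf' : ∀ x ∈ D, f' x ≤ C) (x : ℝ) (hx : x ∈ D) (y : ℝ) (hy : y ∈ D) (hxy : x ≤ y) :
    f y - f x ≤ C * (y - x) := by
  have hderiv : ∀ x ∈ interior D, HasDerivAt f (f' x) x := fun x hx =>
    (hf x (interior_subset hx)).hasDerivAt (mem_interior_iff_mem_nhds.mp hx)
  refine hD.image_sub_le_mul_sub_of_deriv_le (fun x hx => (hf x hx).continuousWithinAt)
    (fun x hx => (hderiv x hx).differentiableAt.differentiableWithinAt) (fun x hx => ?_)
    x hx y hy hxy
  rw [(hderiv x hx).deriv]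
  exact le_hf' x (interior_subset hx)

namespace Matrix

variable {n : Type*} [Fintype n]

theorem dotProduct_mulVec_eq_sum (M : Matrix n n ℝ) (v : n → ℝ) :
    v ⬝ᵥ M *ᵥ v = ∑ i, ∑ j, v i * (M i j * v j) := by
  simp only [dotProduct, mulVec, Finset.mul_sum]

theorem abs_dotProduct_mulVec_le (M : Matrix n n ℝ) (v : n → ℝ) :
    |v ⬝ᵥ M *ᵥ v| ≤ (∑ i, ∑ j, |M i j|) * (v ⬝ᵥ v) := by
  have hcoord : ∀ i, v i * v i ≤ v ⬝ᵥ v := fun i =>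
    Finset.single_le_sum (f := fun k => v k * v k) (fun k _ => mul_self_nonneg _)
      (Finset.mem_univ i)
  have hpair : ∀ i j, |v i| * |v j| ≤ v ⬝ᵥ v := fun i j => by
    nlinarith [sq_nonneg (|v i| - |v j|), abs_mul_abs_self (v i), abs_mul_abs_self (v j),
      hcoord i, hcoord j]
  rw [dotProduct_mulVec_eq_sum, Finset.sum_mul]
  refine (Finset.abs_sum_le_sum_abs _ _).trans (Finset.sum_le_sum fun i _ => ?_)
  rw [Finset.sum_mul]
  refine (Finset.abs_sum_le_sum_abs _ _).trans (Finset.sum_le_sum fun j _ => ?_)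
  calc |v i * (M i j * v j)| = |M i j| * (|v i| * |v j|) := by
        rw [abs_mul, abs_mul]; ring
    _ ≤ |M i j| * (v ⬝ᵥ v) := mul_le_mul_of_nonneg_left (hpair i j) (abs_nonneg _)

theorem dotProduct_sub_smul_one_mulVec [DecidableEq n] (M : Matrix n n ℝ) (c : ℝ) (v : n → ℝ) :
    v ⬝ᵥ (M - c • 1) *ᵥ v = v ⬝ᵥ M *ᵥ v - c * (v ⬝ᵥ v) := by
  simp only [sub_mulVec, smul_mulVec, one_mulVec, dotProduct_sub, dotProduct_smul, smul_eq_mul]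

theorem PosSemidef.mul_dotProduct_le_of_sub_smul_one [DecidableEq n] {M : Matrix n n ℝ} {c : ℝ}
    (h : (M - c • 1).PosSemidef) (v : n → ℝ) : c * (v ⬝ᵥ v) ≤ v ⬝ᵥ M *ᵥ v := by
  have := h.dotProduct_mulVec_nonneg v
  rw [star_trivial, dotProduct_sub_smul_one_mulVec] at this
  linarith

theorem posSemidef_smul_one_sub_of_dotProduct_le [DecidableEq n] {M : Matrix n n ℝ} {c : ℝ}
    (hM : M.IsSymm) (h : ∀ v, v ⬝ᵥ M *ᵥ v ≤ c * (v ⬝ᵥ v)) : (c • 1 - M).PosSemidef := by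
  refine .of_dotProduct_mulVec_nonneg ?_ fun v => ?_
  · simp only [IsHermitian, conjTranspose_eq_transpose_of_trivial, transpose_sub,
      transpose_smul, transpose_one, hM.eq]
  · rw [star_trivial, ← neg_sub, neg_mulVec, dotProduct_neg, dotProduct_sub_smul_one_mulVec]
    linarith [h v]

theorem eventually_mul_dotProduct_le_of_tendsto {α : Type*} {l : Filter α}
    {R : α → Matrix n n ℝ} {R₀ : Matrix n n ℝ} (hR : Tendsto R l (𝓝 R₀)) {c c' : ℝ}
    (hR₀ : ∀ v, c * (v ⬝ᵥ v) ≤ v ⬝ᵥ R₀ *ᵥ v) (hc' : c' < c) :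
    ∀ᶠ a in l, ∀ v, c' * (v ⬝ᵥ v) ≤ v ⬝ᵥ R a *ᵥ v := by
  have hdist : Tendsto (fun a => ∑ i, ∑ j, |(R a - R₀) i j|) l (𝓝 0) := by
    have hcont : Continuous fun M : Matrix n n ℝ => ∑ i, ∑ j, |(M - R₀) i j| := by
      fun_prop
    simpa [Function.comp_def] using (hcont.tendsto R₀).comp hR
  filter_upwards [hdist.eventually (gt_mem_nhds (sub_pos.mpr hc'))] with a ha v
  have hvv : 0 ≤ v ⬝ᵥ v := Finset.sum_nonneg fun i _ => mul_self_nonneg _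
  have hdev := (abs_le.mp (abs_dotProduct_mulVec_le (R a - R₀) v)).1
  rw [sub_mulVec, dotProduct_sub] at hdev
  nlinarith [hR₀ v]

theorem dotProduct_riccati_mulVec_le {A R : Matrix n n ℝ} (hA : A.IsSymm) {c : ℝ} (v : n → ℝ)
    (hR : c * (v ⬝ᵥ v) ≤ v ⬝ᵥ R *ᵥ v) : v ⬝ᵥ (-(A * A) - R) *ᵥ v ≤ -c * (v ⬝ᵥ v) := by
  have hAA : 0 ≤ v ⬝ᵥ (A * A) *ᵥ v := by
    have := (posSemidef_conjTranspose_mul_self A).dotProduct_mulVec_nonneg v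
    rwa [star_trivial, conjTranspose_eq_transpose_of_trivial, hA.eq] at this
  rw [sub_mulVec, neg_mulVec, dotProduct_sub, dotProduct_neg]
  linarith

theorem HasDerivWithinAt.dotProduct_mulVec {A : ℝ → Matrix n n ℝ} {A' : Matrix n n ℝ}
    {s : Set ℝ} {t : ℝ} (hA : ∀ i j, HasDerivWithinAt (fun s => A s i j) (A' i j) s t)
    (v : n → ℝ) : HasDerivWithinAt (fun s => v ⬝ᵥ A s *ᵥ v) (v ⬝ᵥ A' *ᵥ v) s t := by
  simp only [dotProduct_mulVec_eq_sum]
  exact .fun_sum fun i _ => .fun_sum fun j _ => ((hA i j).mul_const (v j)).const_mul (v i)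

end Matrix

theorem riccati_dotProduct_mulVec_sub_le {n : ℕ} {T : ℝ} {A R : ℝ → Matrix (Fin n) (Fin n) ℝ}
    (hsymm : ∀ t ∈ Ico (0 : ℝ) T, (A t).IsSymm)
    (hderiv : ∀ t ∈ Ico (0 : ℝ) T, ∀ i j,
      HasDerivWithinAt (fun s => A s i j) ((-(A t * A t) - R t) i j) (Ico (0 : ℝ) T) t)
    {D : Set ℝ} (hD : Convex ℝ D) (hDI : D ⊆ Ico 0 T) {c : ℝ}
    (hRc : ∀ t ∈ D, ∀ v, c * (v ⬝ᵥ v) ≤ v ⬝ᵥ R t *ᵥ v) (v : Fin n → ℝ)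
    ⦃x y : ℝ⦄ (hx : x ∈ D) (hy : y ∈ D) (hxy : x ≤ y) :
    v ⬝ᵥ A y *ᵥ v - v ⬝ᵥ A x *ᵥ v ≤ -c * (v ⬝ᵥ v) * (y - x) :=
  hD.image_sub_le_mul_sub_of_hasDerivWithinAt_le
    (fun t ht => (HasDerivWithinAt.dotProduct_mulVec (fun i j => hderiv t (hDI ht) i j) v).mono hDI)
    (fun t ht => dotProduct_riccati_mulVec_le (hsymm t (hDI ht)) v (hRc t ht v)) x hx y hy hxy

theorem riccati_neg_of_positive_curvature_somewhere_general (n : ℕ)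
    (T : ℝ) (A R : ℝ → Matrix (Fin n) (Fin n) ℝ)
    (hsymm : ∀ t ∈ Set.Ico (0 : ℝ) T, (A t).IsSymm)
    (hR : ∀ t ∈ Set.Ico (0 : ℝ) T, (R t).PosSemidef)
    (hderiv : ∀ t ∈ Set.Ico (0 : ℝ) T, ∀ i j,
      HasDerivWithinAt (fun s => A s i j) ((-(A t * A t) - R t) i j)
        (Set.Ico (0 : ℝ) T) t)
    (hA0 : A 0 = 0)
    (hRcont : ContinuousOn R (Set.Ico (0 : ℝ) T))
    (t₀ : ℝ) (ht₀ : t₀ ∈ Set.Ico (0 : ℝ) T) (k : ℝ) (hk : 0 < k)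
    (hRk : (R t₀ - k • (1 : Matrix (Fin n) (Fin n) ℝ)).PosSemidef) :
    ∀ t₁, t₀ < t₁ → t₁ < T →
      ∃ l < (0 : ℝ), ∀ t ∈ Set.Ico t₁ T,
        (l • (1 : Matrix (Fin n) (Fin n) ℝ) - A t).PosSemidef := by
  intro t₁ ht₀₁ ht₁T
  set I := Ico (0 : ℝ) T
  have hIcc : ∀ {a b}, 0 ≤ a → b < T → Icc a b ⊆ I := fun ha hb _ hx =>
    ⟨ha.trans hx.1, hx.2.trans_lt hb⟩
  have hnear : ∀ᶠ t in 𝓝[≥] t₀, ∀ v, k / 2 * (v ⬝ᵥ v) ≤ v ⬝ᵥ R t *ᵥ v :=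
    nhdsWithin_le_of_mem
      (mem_nhdsGE_iff_exists_Icc_subset.mpr ⟨t₁, ht₀₁, hIcc ht₀.1 ht₁T⟩)
      (eventually_mul_dotProduct_le_of_tendsto (hRcont t₀ ht₀)
        hRk.mul_dotProduct_le_of_sub_smul_one (by linarith))
  obtain ⟨u, ht₀u, hu⟩ := mem_nhdsGE_iff_exists_Icc_subset.mp hnear
  set s := min u t₁
  have ht₀s : t₀ < s := lt_min ht₀u ht₀₁
  have hsI : s ∈ I := ⟨ht₀.1.trans ht₀s.le, (min_le_right _ _).trans_lt ht₁T⟩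
  have hnonneg : ∀ t ∈ I, ∀ v, 0 * (v ⬝ᵥ v) ≤ v ⬝ᵥ R t *ᵥ v := fun t ht v => by
    simpa using (hR t ht).dotProduct_mulVec_nonneg v
  refine ⟨-(k / 2 * (s - t₀)), neg_lt_zero.mpr (mul_pos (half_pos hk) (sub_pos.mpr ht₀s)),
    fun t ht => ?_⟩
  have htI : t ∈ I := ⟨ht₀.1.trans (ht₀₁.le.trans ht.1), ht.2⟩
  refine posSemidef_smul_one_sub_of_dotProduct_le (hsymm t htI) fun v => ?_
  have hdecr := riccati_dotProduct_mulVec_sub_le hsymm hderiv (convex_Ico 0 T) subset_rfl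
    hnonneg v
  have hfrom0 := hdecr ⟨le_rfl, ht₀.1.trans_lt ht₀.2⟩ ht₀ ht₀.1
  have hdrop := riccati_dotProduct_mulVec_sub_le hsymm hderiv (convex_Icc t₀ s)
    (hIcc ht₀.1 hsI.2) (fun x hx => hu ⟨hx.1, hx.2.trans (min_le_left _ _)⟩) v
    (left_mem_Icc.mpr ht₀s.le) (right_mem_Icc.mpr ht₀s.le) ht₀s.le
  have htos := hdecr hsI htI ((min_le_right _ _).trans ht.1)
  simp only [hA0, zero_mulVec, dotProduct_zero, neg_zero, zero_mul] at hfrom0 htos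
  linarith

/-- Strengthened Riccati comparison: if moreover `R t₀ ≥ k • 1 > 0` for some
`t₀`, then for every `t₁ ∈ (t₀, T)` there is `l < 0` with `A t ≤ l • 1` for all
`t ∈ [t₁, T)`. -/
theorem riccati_neg_of_positive_curvature_somewhere (n : ℕ) (hn : 1 ≤ n)
    (T : ℝ) (hT : 0 < T) (A R : ℝ → Matrix (Fin n) (Fin n) ℝ)
    (hsymm : ∀ t ∈ Set.Ico (0 : ℝ) T, (A t).IsSymm)
    (hR : ∀ t ∈ Set.Ico (0 : ℝ) T, (R t).PosSemidef)
    (hderiv : ∀ t ∈ Set.Ico (0 : ℝ) T, ∀ i j,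
      HasDerivWithinAt (fun s => A s i j) ((-(A t * A t) - R t) i j)
        (Set.Ico (0 : ℝ) T) t)
    (hA0 : A 0 = 0)
    (hRcont : ContinuousOn R (Set.Ico (0 : ℝ) T))
    (t₀ : ℝ) (ht₀ : t₀ ∈ Set.Ico (0 : ℝ) T) (k : ℝ) (hk : 0 < k)
    (hRk : (R t₀ - k • (1 : Matrix (Fin n) (Fin n) ℝ)).PosSemidef) :
    ∀ t₁, t₀ < t₁ → t₁ < T →
      ∃ l < (0 : ℝ), ∀ t ∈ Set.Ico t₁ T,
        (l • (1 : Matrix (Fin n) (Fin n) ℝ) - A t).PosSemidef :=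
  riccati_neg_of_positive_curvature_somewhere_general n T A R hsymm hR hderiv hA0 hRcont t₀ ht₀ k hk
    hRk
end
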